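/- (Hunter–Saxton) Let α, β, γ : ℝ → ℝ be smooth functions with β'(ξ) = (1/2)·α'(ξ)² for all ξ. Define X(t,ξ) := ξ + t·α(ξ) + (t²/2)·β(ξ) + γ(t). Let V ⊆ ℝ² be open with ∂X/∂ξ(t,ξ) ≠ 0 for all (t,ξ) ∈ V, let U ⊆ ℝ² be open, and suppose Φ(t,ξ) := (t, X(t,ξ)) is a bijection from V onto U. If u : U → ℝ is a smooth function satisfying u(t, X(t,ξ)) = α(ξ) + t·β(ξ) + γ'(t) for all (t,ξ) ∈ V, then u is a solution of the Hunter–Saxton equation on U: u_{tx} + u·u_{xx} + (1/2)u_x² = 0 for all (t,x) ∈ U. -/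

import Mathlib

open Real

/-- Partial derivative of a function of two real variables w.r.t. its first argument. -/
noncomputable def d1 (f : ℝ → ℝ → ℝ) (a b : ℝ) : ℝ := deriv (fun s => f s b) a

/-- Partial derivative of a function of two real variables w.r.t. its second argument. -/
noncomputable def d2 (f : ℝ → ℝ → ℝ) (a b : ℝ) : ℝ := deriv (fun s => f a s) b

/-- A function of two real variables is smooth (infinitely differentiable). -/
def Smooth2 (f : ℝ → ℝ → ℝ) : Prop := ContDiff ℝ (⊤ : ℕ∞) (fun p : ℝ × ℝ => f p.1 p.2)

/-- A function of two real variables is smooth on a set `U ⊆ ℝ²`. -/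
def Smooth2On (f : ℝ → ℝ → ℝ) (U : Set (ℝ × ℝ)) : Prop :=
  ContDiffOn ℝ (⊤ : ℕ∞) (fun p : ℝ × ℝ => f p.1 p.2) U

/-!
Along a characteristic `s ↦ (s, X(s, ξ))` we have `∂ₜX = α + tβ + γ' = u`, and the constraint
`β' = α'²/2` makes `∂_ξX = (1 + tα'/2)²` a perfect square. Differentiating the defining identity
of `u` in `ξ` therefore gives `u_x = α'/(1 + tα'/2)` along the characteristic, a solution of the
Riccati equation `w' = -w²/2` in `t`. By the chain rule that `t`-derivative is
`u_{xt} + u u_{xx}`, which is the Hunter–Saxton equation.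
-/

open Function Filter Topology

lemma d1_eq_fderiv {f : ℝ → ℝ → ℝ} {a b : ℝ} (hf : DifferentiableAt ℝ (uncurry f) (a, b)) :
    d1 f a b = fderiv ℝ (uncurry f) (a, b) (1, 0) :=
  (hf.hasFDerivAt.comp_hasDerivAt a ((hasDerivAt_id' a).prodMk (hasDerivAt_const a b)) :).deriv

lemma d2_eq_fderiv {f : ℝ → ℝ → ℝ} {a b : ℝ} (hf : DifferentiableAt ℝ (uncurry f) (a, b)) :
    d2 f a b = fderiv ℝ (uncurry f) (a, b) (0, 1) :=
  (hf.hasFDerivAt.comp_hasDerivAt b ((hasDerivAt_const b a).prodMk (hasDerivAt_id' b)) :).deriv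

lemma hasDerivAt_comp_prodMk {f : ℝ → ℝ → ℝ} {b c : ℝ → ℝ} {b' c' s : ℝ}
    (hf : DifferentiableAt ℝ (uncurry f) (b s, c s)) (hb : HasDerivAt b b' s)
    (hc : HasDerivAt c c' s) :
    HasDerivAt (fun s => f (b s) (c s)) (b' * d1 f (b s) (c s) + c' * d2 f (b s) (c s)) s := by
  have h := hf.hasFDerivAt.comp_hasDerivAt s (hb.prodMk hc)
  have hsplit : ((b', c') : ℝ × ℝ) = b' • ((1 : ℝ), (0 : ℝ)) + c' • ((0 : ℝ), (1 : ℝ)) := by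
    simp
  rwa [hsplit, map_add, map_smul, map_smul, ← d1_eq_fderiv hf, ← d2_eq_fderiv hf] at h

lemma Smooth2On.differentiableAt {f : ℝ → ℝ → ℝ} {U : Set (ℝ × ℝ)} (hf : Smooth2On f U)
    (hU : IsOpen U) {p : ℝ × ℝ} (hp : p ∈ U) : DifferentiableAt ℝ (uncurry f) p :=
  (hf.contDiffAt (hU.mem_nhds hp)).differentiableAt (by simp)

lemma Smooth2On.d2 {f : ℝ → ℝ → ℝ} {U : Set (ℝ × ℝ)} (hf : Smooth2On f U) (hU : IsOpen U) :
    Smooth2On (d2 f) U := by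
  have hG : ContDiffOn ℝ (⊤ : ℕ∞) (fun p => fderiv ℝ (uncurry f) p (0, 1)) U :=
    (hf.fderiv_of_isOpen hU (by simp)).clm_apply contDiffOn_const
  exact hG.congr fun p hp => d2_eq_fderiv (hf.differentiableAt hU hp)

lemma hasDerivAt_riccati {a t : ℝ} (ht : 1 + t * a / 2 ≠ 0) :
    HasDerivAt (fun s => a / (1 + s * a / 2)) (-(1 / 2) * (a / (1 + t * a / 2)) ^ 2) t := by
  have hden : HasDerivAt (fun s => 1 + s * a / 2) (a / 2) t := by
    simpa using (((hasDerivAt_id t).mul_const a).div_const 2).const_add 1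
  exact ((hasDerivAt_const t a).div hden ht).congr_deriv (by field_simp; ring)

section Characteristics

variable {α β γ : ℝ → ℝ} {X : ℝ → ℝ → ℝ}

lemma hasDerivAt_characteristic_time {t : ℝ} (hγ : DifferentiableAt ℝ γ t)
    (hX : ∀ t ξ, X t ξ = ξ + t * α ξ + (t ^ 2 / 2) * β ξ + γ t) (ξ : ℝ) :
    HasDerivAt (fun s => X s ξ) (α ξ + t * β ξ + deriv γ t) t := by
  simp only [hX]
  have hsq : HasDerivAt (fun s : ℝ => s ^ 2 / 2) t t := by
    simpa using (hasDerivAt_pow 2 t).div_const 2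
  exact ((((hasDerivAt_const t ξ).add ((hasDerivAt_id' t).mul_const (α ξ))).add
    (hsq.mul_const (β ξ))).add hγ.hasDerivAt).congr_deriv (by ring)

lemma hasDerivAt_characteristic_label {ξ : ℝ} (hα : DifferentiableAt ℝ α ξ)
    (hβ : DifferentiableAt ℝ β ξ) (hβ' : deriv β ξ = (1 / 2) * (deriv α ξ) ^ 2)
    (hX : ∀ t ξ, X t ξ = ξ + t * α ξ + (t ^ 2 / 2) * β ξ + γ t) (t : ℝ) :
    HasDerivAt (X t) ((1 + t * deriv α ξ / 2) ^ 2) ξ := by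
  have h := (((hasDerivAt_id' ξ).add (hα.hasDerivAt.const_mul t)).add
    (hβ.hasDerivAt.const_mul (t ^ 2 / 2))).add_const (γ t)
  rw [show X t = fun s => s + t * α s + (t ^ 2 / 2) * β s + γ t from funext (hX t)]
  exact h.congr_deriv (by rw [hβ']; ring)

lemma d2_eq_along_characteristic {ξ : ℝ} (hα : DifferentiableAt ℝ α ξ)
    (hβ : DifferentiableAt ℝ β ξ) (hβ' : deriv β ξ = (1 / 2) * (deriv α ξ) ^ 2)
    (hX : ∀ t ξ, X t ξ = ξ + t * α ξ + (t ^ 2 / 2) * β ξ + γ t)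
    {V : Set (ℝ × ℝ)} (hV : IsOpen V) {u : ℝ → ℝ → ℝ}
    (huX : ∀ p ∈ V, u p.1 (X p.1 p.2) = α p.2 + p.1 * β p.2 + deriv γ p.1)
    {t : ℝ} (hq : (t, ξ) ∈ V) (hu : DifferentiableAt ℝ (uncurry u) (t, X t ξ))
    (hg : 1 + t * deriv α ξ / 2 ≠ 0) :
    d2 u t (X t ξ) = deriv α ξ / (1 + t * deriv α ξ / 2) := by
  have hlhs : HasDerivAt (fun s => u t (X t s))
      ((1 + t * deriv α ξ / 2) ^ 2 * d2 u t (X t ξ)) ξ := by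
    simpa using hasDerivAt_comp_prodMk hu (hasDerivAt_const ξ t)
      (hasDerivAt_characteristic_label hα hβ hβ' hX t)
  have hrhs : HasDerivAt (fun s => α s + t * β s + deriv γ t)
      (deriv α ξ * (1 + t * deriv α ξ / 2)) ξ :=
    ((hα.hasDerivAt.add (hβ.hasDerivAt.const_mul t)).add_const _).congr_deriv
      (by rw [hβ']; ring)
  have hloc : (fun s => u t (X t s)) =ᶠ[𝓝 ξ] fun s => α s + t * β s + deriv γ t := by
    filter_upwards [(Continuous.prodMk_right t).continuousAt.preimage_mem_nhds
      (hV.mem_nhds hq)] with s hs using huX (t, s) hs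
  have h := hlhs.unique (hrhs.congr_of_eventuallyEq hloc)
  rw [eq_div_iff hg]
  apply mul_right_cancel₀ hg
  linear_combination h

end Characteristics

/-- The Hunter–Saxton implicit parametric formula: if `u(t, X(t,ξ)) = α(ξ) + tβ(ξ) + γ'(t)`
with `X(t,ξ) = ξ + tα(ξ) + (t²/2)β(ξ) + γ(t)`, `β' = (1/2)(α')²`, and `Φ(t,ξ) = (t, X(t,ξ))`
a bijection from `V` onto `U` with `∂X/∂ξ ≠ 0` on `V`, then `u` solves the Hunter–Saxton
equation on `U`. -/
theorem hunterSaxton_general_solution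
    (α β γ : ℝ → ℝ)
    (hα : ContDiff ℝ (⊤ : ℕ∞) α) (hβ : ContDiff ℝ (⊤ : ℕ∞) β)
    (hγ : ContDiff ℝ (⊤ : ℕ∞) γ)
    (hβ' : ∀ ξ : ℝ, deriv β ξ = (1/2) * (deriv α ξ)^2)
    (X : ℝ → ℝ → ℝ)
    (hX : ∀ t ξ : ℝ, X t ξ = ξ + t * α ξ + (t^2/2) * β ξ + γ t)
    (V U : Set (ℝ × ℝ)) (hV : IsOpen V) (hUo : IsOpen U)
    (hXξ : ∀ p ∈ V, d2 X p.1 p.2 ≠ 0)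
    (hbij : Set.BijOn (fun p : ℝ × ℝ => (p.1, X p.1 p.2)) V U)
    (u : ℝ → ℝ → ℝ) (hu : Smooth2On u U)
    (huX : ∀ p ∈ V, u p.1 (X p.1 p.2) = α p.2 + p.1 * β p.2 + deriv γ p.1) :
    ∀ p ∈ U,
      d1 (d2 u) p.1 p.2 + u p.1 p.2 * d2 (d2 u) p.1 p.2 + (1/2) * (d2 u p.1 p.2)^2 = 0 := by
  have hαd : Differentiable ℝ α := hα.differentiable (by simp)
  have hβd : Differentiable ℝ β := hβ.differentiable (by simp)
  have hg : ∀ q ∈ V, 1 + q.1 * deriv α q.2 / 2 ≠ 0 := by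
    rintro ⟨t, ξ⟩ hq
    have h := hXξ _ hq
    rw [d2, (hasDerivAt_characteristic_label (hαd ξ) (hβd ξ) (hβ' ξ) hX t).deriv] at h
    exact (pow_ne_zero_iff two_ne_zero).mp h
  have hux : ∀ q ∈ V, d2 u q.1 (X q.1 q.2) = deriv α q.2 / (1 + q.1 * deriv α q.2 / 2) :=
    fun q hq => d2_eq_along_characteristic (hαd _) (hβd _) (hβ' _) hX hV huX hq
      (hu.differentiableAt hUo (hbij.mapsTo hq)) (hg q hq)
  rintro _ hp
  obtain ⟨⟨t, ξ⟩, hq, rfl⟩ := hbij.surjOn hp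
  have hchain := hasDerivAt_comp_prodMk ((hu.d2 hUo).differentiableAt hUo hp)
    (hasDerivAt_id' t) (hasDerivAt_characteristic_time (hγ.differentiable (by simp) t) hX ξ)
  have hloc : (fun s => d2 u s (X s ξ)) =ᶠ[𝓝 t]
      fun s => deriv α ξ / (1 + s * deriv α ξ / 2) := by
    filter_upwards [(Continuous.prodMk_left ξ).continuousAt.preimage_mem_nhds
      (hV.mem_nhds hq)] with s hs using hux (s, ξ) hs
  have hriccati := (hasDerivAt_riccati (hg _ hq)).congr_of_eventuallyEq hloc
  have h := hchain.unique hriccati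
  simp only [huX _ hq, hux _ hq] at h ⊢
  linear_combination h
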